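/- arXiv:2201.04257 — 3 statements merged into one kernel-verified Lean document; each statement's English description precedes it below -/
import Mathlib

section
/- For natural numbers n and k with 1 ≤ k ≤ n-1, the binomial coefficient satisfies 1/2 ≤ C(n,k) · exp(-n·H(k/n)) · √(2k(n-k)/n) ≤ 1/√π, where H is the binary entropy function with natural logarithm. -/
/-!
With `s m = m! / (√(2m) (m/e)^m)` (Mathlib's `Stirling.stirlingSeq`) and `b = n - k`, the
quantity bounded is exactly `s n / (s k * s b)`. As `s` decreases to `√π`, it is at most
`s k / (s k * s b) ≤ 1 / √π`. For the lower bound, Robbins' estimate gives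
`s m ≤ √π e^(1/(12m))`, hence `s k * s b ≤ π e^(1/9) ≤ 2√π ≤ 2 s n` except for
`{k, b} = {1, 1}, {1, 2}`, which are checked directly.
-/

open Real

noncomputable def binEnt (x : ℝ) : ℝ := -(x * Real.log x) - (1 - x) * Real.log (1 - x)

open Filter Topology Stirling

lemma mul_binEnt_div_add {a b : ℝ} (ha : 0 < a) (hb : 0 < b) :
    (a + b) * binEnt (a / (a + b)) = (a + b) * log (a + b) - a * log a - b * log b := by
  have hsub : 1 - a / (a + b) = b / (a + b) := by field_simp; ring
  rw [binEnt, hsub, log_div ha.ne' (add_pos ha hb).ne', log_div hb.ne' (add_pos ha hb).ne']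
  field_simp
  ring

lemma exp_neg_mul_binEnt_div_add {a b : ℝ} (ha : 0 < a) (hb : 0 < b) :
    exp (-(a + b) * binEnt (a / (a + b))) = a ^ a * b ^ b / (a + b) ^ (a + b) := by
  rw [neg_mul, mul_binEnt_div_add ha hb, rpow_def_of_pos ha, rpow_def_of_pos hb,
    rpow_def_of_pos (by positivity), ← exp_add, ← exp_sub]
  ring_nf

lemma sqrt_two_mul_mul_div_add {a b : ℝ} (ha : 0 ≤ a) (hb : 0 ≤ b) :
    √(2 * a * b / (a + b)) = √(2 * a) * √(2 * b) / √(2 * (a + b)) := by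
  rw [← sqrt_mul (by positivity), ← sqrt_div (by positivity)]
  congr 1
  rcases (add_nonneg ha hb).eq_or_lt with h | h
  · rw [← h]; simp
  · field_simp

namespace Stirling

lemma stirlingSeq_pos {n : ℕ} (hn : n ≠ 0) : 0 < stirlingSeq n := by
  unfold stirlingSeq; positivity

lemma stirlingSeq_le_of_le {m n : ℕ} (hm : m ≠ 0) (hmn : m ≤ n) :
    stirlingSeq n ≤ stirlingSeq m := by
  obtain ⟨m, rfl⟩ := Nat.exists_eq_succ_of_ne_zero hm
  obtain ⟨n, rfl⟩ := Nat.exists_eq_succ_of_ne_zero (by omega : n ≠ 0)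
  exact stirlingSeq'_antitone (Nat.succ_le_succ_iff.mp hmn)

lemma add_choose_mul_pow_mul_sqrt_eq_stirlingSeq_div {k b : ℕ} (hk : k ≠ 0) (hb : b ≠ 0) :
    ((k + b).choose k : ℝ) * ((k : ℝ) ^ k * (b : ℝ) ^ b / ((k : ℝ) + b) ^ (k + b))
        * √(2 * k * b / (k + b))
      = stirlingSeq (k + b) / (stirlingSeq k * stirlingSeq b) := by
  have hchoose : ((k + b).choose k : ℝ) * k.factorial * b.factorial = (k + b).factorial := by
    rw [Nat.choose_symm_add]
    exact_mod_cast Nat.add_choose_mul_factorial_mul_factorial k b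
  rw [sqrt_two_mul_mul_div_add (Nat.cast_nonneg k) (Nat.cast_nonneg b)]
  simp only [stirlingSeq, div_pow, pow_add, Nat.cast_add, ← hchoose]
  field_simp

lemma monotone_log_stirlingSeq_succ_sub :
    Monotone fun m : ℕ ↦ log (stirlingSeq (m + 1)) - 1 / (12 * (m + 1 : ℝ)) := by
  refine monotone_nat_of_le_succ fun m ↦ ?_
  have hstep := log_stirlingSeq_sdiff_le (m + 1)
  have htelescope : 1 / (12 * ((m : ℝ) + 1)) - 1 / (12 * ((m : ℝ) + 1 + 1))
      = 1 / (12 * ((m : ℝ) + 1) * ((m : ℝ) + 1 + 1)) := by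
    field_simp; ring
  push_cast at hstep ⊢
  linarith

-- Robbins' stepwise bound `log_stirlingSeq_sdiff_le`, summed from `n` to `∞`.
lemma stirlingSeq_le_sqrt_pi_mul_exp {n : ℕ} (hn : n ≠ 0) :
    stirlingSeq n ≤ √π * exp (1 / (12 * n)) := by
  obtain ⟨m, rfl⟩ := Nat.exists_eq_succ_of_ne_zero hn
  have hlim : Tendsto (fun m : ℕ ↦ log (stirlingSeq (m + 1)) - 1 / (12 * (m + 1 : ℝ)))
      atTop (𝓝 (log √π - 0)) :=
    ((tendsto_stirlingSeq_sqrt_pi.comp (tendsto_add_atTop_nat 1)).log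
      (sqrt_pos.2 pi_pos).ne').sub <| tendsto_const_nhds.div_atTop <|
      (tendsto_atTop_add_const_right _ 1 tendsto_natCast_atTop_atTop).const_mul_atTop
        (by norm_num)
  have := monotone_log_stirlingSeq_succ_sub.ge_of_tendsto hlim m
  rw [← log_le_log_iff (stirlingSeq_pos hn) (by positivity),
    log_mul (by positivity) (by positivity), log_exp]
  push_cast
  linarith

lemma sqrt_pi_mul_exp_one_div_nine_le_two : √π * exp (1 / 9) ≤ 2 := by
  have hexp : exp (1 / 9) ≤ 9 / 8 := by
    have := exp_bound_div_one_sub_of_interval (x := 1 / 9) (by norm_num) (by norm_num)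
    norm_num at this ⊢
    linarith
  have hpi : √π ≤ 16 / 9 := by
    rw [sqrt_le_left (by norm_num)]
    linarith [pi_lt_d2]
  calc √π * exp (1 / 9) ≤ 16 / 9 * (9 / 8) := by gcongr
    _ = 2 := by norm_num

lemma stirlingSeq_two : stirlingSeq 2 = exp 1 ^ 2 / 4 := by
  have hsqrt : √(2 * 2 : ℝ) = 2 := by
    rw [show (2 * 2 : ℝ) = 2 ^ 2 by norm_num, sqrt_sq (by norm_num)]
  simp only [stirlingSeq, Nat.cast_ofNat, hsqrt, Nat.factorial_two]
  field_simp
  ring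

lemma stirlingSeq_three : stirlingSeq 3 = 2 * exp 1 ^ 3 / (9 * √6) := by
  have hfact : ((Nat.factorial 3 : ℕ) : ℝ) = 6 := by norm_num [Nat.factorial]
  simp only [stirlingSeq, Nat.cast_ofNat, hfact, show (2 * 3 : ℝ) = 6 by norm_num]
  field_simp
  ring

lemma stirlingSeq_one_mul_self : stirlingSeq 1 * stirlingSeq 1 = 2 * stirlingSeq 2 := by
  rw [stirlingSeq_one, stirlingSeq_two, div_mul_div_comm, mul_self_sqrt zero_le_two]
  ring

lemma stirlingSeq_one_mul_stirlingSeq_two_le :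
    stirlingSeq 1 * stirlingSeq 2 ≤ 2 * stirlingSeq 3 := by
  have hsqrt : 9 * √6 ≤ 16 * √2 := by
    rw [show (6 : ℝ) = 3 * 2 by norm_num, sqrt_mul (by norm_num), ← mul_assoc]
    gcongr
    rw [← le_div_iff₀' (by norm_num), sqrt_le_left (by norm_num)]
    norm_num
  rw [stirlingSeq_one, stirlingSeq_two, stirlingSeq_three, div_mul_div_comm,
    mul_div_assoc', div_le_div_iff₀ (by positivity) (by positivity)]
  nlinarith [mul_le_mul_of_nonneg_left hsqrt (by positivity : (0 : ℝ) ≤ exp 1 ^ 3)]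

lemma stirlingSeq_mul_le_two_mul_stirlingSeq_add {k b : ℕ} (hk : k ≠ 0) (hb : b ≠ 0) :
    stirlingSeq k * stirlingSeq b ≤ 2 * stirlingSeq (k + b) := by
  wlog hkb : k ≤ b generalizing k b
  · rw [mul_comm, add_comm]
    exact this hb hk (by omega)
  -- Robbins' bound is too weak only for `(k, b) = (1, 1), (1, 2)`; the first is an equality.
  by_cases hsmall : k = 1 ∧ b ≤ 2
  · obtain ⟨rfl, hb2⟩ := hsmall
    interval_cases b
    · exact stirlingSeq_one_mul_self.le
    · exact stirlingSeq_one_mul_stirlingSeq_two_le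
  have hprod : 3 * (k + b) ≤ 4 * k * b := by
    rcases (by omega : k = 1 ∨ 2 ≤ k) with rfl | hk2
    · omega
    · nlinarith
  have hexp : 1 / (12 * k : ℝ) + 1 / (12 * b) ≤ 1 / 9 := by
    have hprod_real : (3 * (k + b) : ℝ) ≤ 4 * k * b := by exact_mod_cast hprod
    rw [div_add_div _ _ (by positivity) (by positivity),
      div_le_div_iff₀ (by positivity) (by norm_num)]
    linarith
  calc stirlingSeq k * stirlingSeq b
      ≤ (√π * exp (1 / (12 * k))) * (√π * exp (1 / (12 * b))) :=
        mul_le_mul (stirlingSeq_le_sqrt_pi_mul_exp hk) (stirlingSeq_le_sqrt_pi_mul_exp hb)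
          (stirlingSeq_pos hb).le (by positivity)
    _ = √π * (√π * exp (1 / (12 * k) + 1 / (12 * b))) := by rw [exp_add]; ring
    _ ≤ √π * (√π * exp (1 / 9)) := by gcongr
    _ ≤ √π * 2 := by gcongr; exact sqrt_pi_mul_exp_one_div_nine_le_two
    _ ≤ 2 * stirlingSeq (k + b) := by
        rw [mul_comm]; gcongr; exact sqrt_pi_le_stirlingSeq (by omega)

end Stirling

/-- Standard bounds on the binomial coefficient: for `1 ≤ k ≤ n - 1`,
`1/2 ≤ C(n,k)·exp(-n·H(k/n))·√(2k(n-k)/n) ≤ 1/√π`. -/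
theorem binomial_entropy_bounds (n k : ℕ) (hk1 : 1 ≤ k) (hk2 : k < n) :
    1 / 2 ≤ (n.choose k : ℝ) * Real.exp (-(n : ℝ) * binEnt ((k : ℝ) / n))
        * Real.sqrt (2 * k * ((n : ℝ) - k) / n)
    ∧ (n.choose k : ℝ) * Real.exp (-(n : ℝ) * binEnt ((k : ℝ) / n))
        * Real.sqrt (2 * k * ((n : ℝ) - k) / n) ≤ 1 / Real.sqrt π := by
  obtain ⟨b, rfl⟩ := Nat.exists_eq_add_of_le hk2.le
  have hk : k ≠ 0 := by omega
  have hb : b ≠ 0 := by omega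
  have hentropy : exp (-((k + b : ℕ) : ℝ) * binEnt ((k : ℝ) / (k + b : ℕ)))
      = (k : ℝ) ^ k * (b : ℝ) ^ b / ((k : ℝ) + b) ^ (k + b) := by
    rw [Nat.cast_add, exp_neg_mul_binEnt_div_add (by positivity) (by positivity)]
    norm_cast
  rw [hentropy, Nat.cast_add, add_sub_cancel_left,
    add_choose_mul_pow_mul_sqrt_eq_stirlingSeq_div hk hb]
  have hkb := mul_pos (stirlingSeq_pos hk) (stirlingSeq_pos hb)
  constructor
  · rw [le_div_iff₀ hkb]
    linarith [stirlingSeq_mul_le_two_mul_stirlingSeq_add hk hb]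
  · rw [div_le_div_iff₀ hkb (sqrt_pos.2 pi_pos), one_mul]
    exact mul_le_mul (stirlingSeq_le_of_le hk (Nat.le_add_right k b))
      (sqrt_pi_le_stirlingSeq hb) (sqrt_nonneg π) (stirlingSeq_pos hk).le
end

section
/- Let p ∈ (0,1), and r, N ∈ ℕ with 2 ≤ r < N. Let τ₁,…,τ_r be i.i.d. geometric with success probability 1-p. Then P(τ₁+⋯+τ_r > N) ≥ (1-p)√N · exp(-N·D((r-1)/N ‖ 1-p)) / √(8(r-1)(N-r+1)). -/
/-!
The event `∑ τᵢ > N` contains the disjoint events `{τᵢ = vᵢ + 1 for all i}` with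
`∑ vᵢ = N + 1 - r`; by independence each has probability `p ^ (N + 1 - r) * (1 - p) ^ r`, and there
are `C(N, r - 1)` of them. With `k = r - 1` and `m = N + 1 - r`, the exponential factor equals
`(1 - p) ^ k * p ^ m * N ^ N / (k ^ k * m ^ m)`, so what remains is the entropy bound
`N ^ (2N + 1) ≤ 8 * k ^ (2k + 1) * m ^ (2m + 1) * C(N, k) ^ 2`. It is an equality at `k = m = 1`, and
replacing `m` by `m + 1` multiplies the ratio of its two sides by
`(1 + 1/m) ^ (2m + 1) / (1 + 1/N) ^ (2N + 1) ≥ 1`: the function `(2x + 1) * log (1 + 1/x)` is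
decreasing, its expansion in powers of `1 / (2x + 1) ^ 2` having positive coefficients.
-/

open MeasureTheory ProbabilityTheory Real

/-- Binary Kullback–Leibler divergence (natural logarithm). -/
noncomputable def klBin (a b : ℝ) : ℝ := a * Real.log (a / b) + (1 - a) * Real.log ((1 - a) / (1 - b))

open Finset

theorem Finset.card_piAntidiag_nat {ι : Type*} [DecidableEq ι] (s : Finset ι) (n : ℕ) :
    #(s.piAntidiag n) = (#s + n - 1).choose n := by
  rw [← card_finsuppAntidiag_nat_eq_choose, finsuppAntidiag, card_map, card_attach]

section Geometric

variable {Ω ι : Type*} [MeasurableSpace Ω] {μ : Measure Ω} [Fintype ι] {τ : ι → Ω → ℕ}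
  {p : ℝ}

theorem measure_iInter_eq_add_one_of_geometric (hp0 : 0 ≤ p) (hp1 : p ≤ 1)
    (hgeo : ∀ i, ∀ k : ℕ, μ {ω | τ i ω = k + 1} = ENNReal.ofReal (p ^ k * (1 - p)))
    (hind : iIndepFun τ μ) (v : ι → ℕ) :
    μ (⋂ i, {ω | τ i ω = v i + 1})
      = ENNReal.ofReal (p ^ (∑ i, v i) * (1 - p) ^ Fintype.card ι) := by
  rw [hind.meas_iInter (s := fun i => {ω | τ i ω = v i + 1})
    fun i => ⟨{v i + 1}, measurableSet_singleton _, rfl⟩]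
  simp_rw [hgeo]
  rw [← ENNReal.ofReal_prod_of_nonneg fun i _ => by have := sub_nonneg.2 hp1; positivity,
    prod_mul_distrib, prod_pow_eq_pow_sum, prod_const, card_univ]

theorem ofReal_choose_mul_le_measure_sum_eq (hmeas : ∀ i, Measurable (τ i))
    (hp0 : 0 ≤ p) (hp1 : p ≤ 1)
    (hgeo : ∀ i, ∀ k : ℕ, μ {ω | τ i ω = k + 1} = ENNReal.ofReal (p ^ k * (1 - p)))
    (hind : iIndepFun τ μ) (M : ℕ) :
    ENNReal.ofReal ((Fintype.card ι + M - 1).choose M * (p ^ M * (1 - p) ^ Fintype.card ι))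
      ≤ μ {ω | ∑ i, τ i ω = M + Fintype.card ι} := by
  classical
  set F : Finset (ι → ℕ) := piAntidiag univ M
  set E : (ι → ℕ) → Set Ω := fun v => ⋂ i, {ω | τ i ω = v i + 1}
  have hdisj : (F : Set (ι → ℕ)).PairwiseDisjoint E := by
    intro v _ w _ hvw
    obtain ⟨i, hi⟩ := Function.ne_iff.1 hvw
    refine Set.disjoint_left.2 fun ω hv hw => hi ?_
    have := (Set.mem_iInter.1 hv i).symm.trans (Set.mem_iInter.1 hw i)
    omega
  have hsub : (⋃ v ∈ F, E v) ⊆ {ω | ∑ i, τ i ω = M + Fintype.card ι} := by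
    intro ω hω
    obtain ⟨v, hvF, hω⟩ := Set.mem_iUnion₂.1 hω
    have hv := (mem_piAntidiag.1 hvF).1
    change ∑ i, τ i ω = _
    rw [sum_congr rfl fun i _ => Set.mem_iInter.1 hω i, sum_add_distrib, hv]
    simp
  calc ENNReal.ofReal ((Fintype.card ι + M - 1).choose M * (p ^ M * (1 - p) ^ Fintype.card ι))
      = ∑ _v ∈ F, ENNReal.ofReal (p ^ M * (1 - p) ^ Fintype.card ι) := by
        rw [sum_const, card_piAntidiag_nat, card_univ, nsmul_eq_mul,
          ENNReal.ofReal_mul (by positivity), ENNReal.ofReal_natCast]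
    _ = ∑ v ∈ F, μ (E v) := by
        refine sum_congr rfl fun v hv => ?_
        rw [measure_iInter_eq_add_one_of_geometric hp0 hp1 hgeo hind, (mem_piAntidiag.1 hv).1]
    _ = μ (⋃ v ∈ F, E v) :=
        (measure_biUnion_finset hdisj fun v _ =>
          .iInter fun i => hmeas i (measurableSet_singleton _)).symm
    _ ≤ _ := measure_mono hsub

end Geometric

theorem antitoneOn_two_mul_add_one_mul_log_one_add_inv :
    AntitoneOn (fun x : ℝ => (2 * x + 1) * log (1 + x⁻¹)) (Set.Ioi 0) := by
  intro a (ha : 0 < a) b _ hab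
  have series (c : ℝ) (hc : 0 < c) :
      HasSum (fun k : ℕ => 2 * (1 / (2 * k + 1)) * (1 / (2 * c + 1)) ^ (2 * k))
        ((2 * c + 1) * log (1 + c⁻¹)) := by
    refine ((hasSum_log_one_add_inv hc).mul_left (2 * c + 1)).congr_fun fun k => ?_
    rw [pow_succ]
    field_simp
  refine hasSum_le (fun k => ?_) (series b (ha.trans_le hab)) (series a ha)
  have : 0 < 2 * b + 1 := by linarith
  gcongr

theorem pow_mul_add_one_pow_le {m n : ℕ} (hm : 0 < m) (hmn : m ≤ n) :
    m ^ (2 * m + 1) * (n + 1) ^ (2 * n + 1) ≤ (m + 1) ^ (2 * m + 1) * n ^ (2 * n + 1) := by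
  have hm' : (0 : ℝ) < m := by exact_mod_cast hm
  have hn' : (0 : ℝ) < n := by exact_mod_cast hm.trans_le hmn
  have hlog := antitoneOn_two_mul_add_one_mul_log_one_add_inv hm' hn'
    (by exact_mod_cast hmn : (m : ℝ) ≤ n)
  have key : (((n : ℝ) + 1) / n) ^ (2 * n + 1) ≤ (((m : ℝ) + 1) / m) ^ (2 * m + 1) := by
    rw [← log_le_log_iff (by positivity) (by positivity), log_pow, log_pow]
    have e (x : ℝ) (hx : 0 < x) : (x + 1) / x = 1 + x⁻¹ := by field_simp
    rw [e _ hm', e _ hn']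
    push_cast
    exact hlog
  rw [div_pow, div_pow, div_le_div_iff₀ (by positivity) (by positivity)] at key
  rw [mul_comm] at key
  exact_mod_cast key

theorem pow_le_choose_sq_step {k m : ℕ} (hm : 0 < m)
    (h : (k + m) ^ (2 * (k + m) + 1)
      ≤ 8 * k ^ (2 * k + 1) * m ^ (2 * m + 1) * (k + m).choose m ^ 2) :
    (k + (m + 1)) ^ (2 * (k + (m + 1)) + 1)
      ≤ 8 * k ^ (2 * k + 1) * (m + 1) ^ (2 * (m + 1) + 1) * (k + (m + 1)).choose (m + 1) ^ 2 := by
  have hchoose := Nat.add_one_mul_choose_eq (k + m) m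
  have key : (k + m + 1) ^ (2 * (k + m) + 1)
      ≤ 8 * k ^ (2 * k + 1) * (m + 1) ^ (2 * m + 1) * (k + m).choose m ^ 2 := by
    refine Nat.le_of_mul_le_mul_left ?_ (pow_pos hm (2 * m + 1))
    calc m ^ (2 * m + 1) * (k + m + 1) ^ (2 * (k + m) + 1)
        ≤ (m + 1) ^ (2 * m + 1) * (k + m) ^ (2 * (k + m) + 1) :=
          pow_mul_add_one_pow_le hm (Nat.le_add_left m k)
      _ ≤ (m + 1) ^ (2 * m + 1)
            * (8 * k ^ (2 * k + 1) * m ^ (2 * m + 1) * (k + m).choose m ^ 2) := by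
          gcongr
      _ = m ^ (2 * m + 1)
            * (8 * k ^ (2 * k + 1) * (m + 1) ^ (2 * m + 1) * (k + m).choose m ^ 2) := by
          ring
  rw [← add_assoc]
  calc (k + m + 1) ^ (2 * (k + m + 1) + 1)
        = (k + m + 1) ^ 2 * (k + m + 1) ^ (2 * (k + m) + 1) := by ring
    _ ≤ (k + m + 1) ^ 2
          * (8 * k ^ (2 * k + 1) * (m + 1) ^ (2 * m + 1) * (k + m).choose m ^ 2) := by gcongr
    _ = 8 * k ^ (2 * k + 1) * (m + 1) ^ (2 * m + 1) * ((k + m + 1) * (k + m).choose m) ^ 2 := by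
        ring
    _ = _ := by rw [hchoose]; ring

theorem pow_le_choose_sq_of_one {k : ℕ}
    (h : (k + 1) ^ (2 * (k + 1) + 1) ≤ 8 * k ^ (2 * k + 1) * (k + 1) ^ 2)
    {m : ℕ} (hm : 0 < m) :
    (k + m) ^ (2 * (k + m) + 1)
      ≤ 8 * k ^ (2 * k + 1) * m ^ (2 * m + 1) * (k + m).choose m ^ 2 := by
  induction m, Nat.one_le_iff_ne_zero.2 hm.ne' using Nat.le_induction with
  | base => simpa using h
  | succ m hm1 ih => exact pow_le_choose_sq_step hm1 (ih hm1)

theorem pow_le_choose_sq {k m : ℕ} (hk : 0 < k) (hm : 0 < m) :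
    (k + m) ^ (2 * (k + m) + 1)
      ≤ 8 * k ^ (2 * k + 1) * m ^ (2 * m + 1) * (k + m).choose m ^ 2 := by
  have hk1 := pow_le_choose_sq_of_one (k := 1) (by norm_num) hk
  rw [add_comm 1 k, Nat.choose_symm_add, Nat.choose_one_right] at hk1
  exact pow_le_choose_sq_of_one hk1 hm

theorem exp_neg_mul_klBin {k m : ℕ} (hk : 0 < k) (hm : 0 < m) {q : ℝ} (hq0 : 0 < q)
    (hq1 : q < 1) :
    exp (-((k : ℝ) + m) * klBin (k / (k + m)) q)
      = ((k + m) * q / k) ^ k * ((k + m) * (1 - q) / m) ^ m := by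
  have hk' : (0 : ℝ) < k := by exact_mod_cast hk
  have hm' : (0 : ℝ) < m := by exact_mod_cast hm
  have hq1' : 0 < 1 - q := sub_pos.2 hq1
  have h1 : 1 - k / ((k : ℝ) + m) = m / (k + m) := by field_simp; ring
  have log_inv_div (a b : ℝ) (ha : 0 < a) (hb : 0 < b) :
      log (a / ((k : ℝ) + m) / b) = -log ((k + m) * b / a) := by
    rw [← log_inv]; congr 1; field_simp
  rw [klBin, h1, log_inv_div _ _ hk' hq0, log_inv_div _ _ hm' hq1',
    show -((k : ℝ) + m) * (k / (k + m) * -log ((k + m) * q / k)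
        + m / (k + m) * -log ((k + m) * (1 - q) / m))
      = k * log ((k + m) * q / k) + m * log ((k + m) * (1 - q) / m) by field_simp; ring,
    exp_add, exp_nat_mul, exp_nat_mul, exp_log (by positivity), exp_log (by positivity)]

theorem sqrt_mul_exp_neg_mul_klBin_le {k m : ℕ} (hk : 0 < k) (hm : 0 < m) {q : ℝ} (hq0 : 0 < q)
    (hq1 : q < 1) :
    √((k : ℝ) + m) * exp (-((k : ℝ) + m) * klBin (k / (k + m)) q) / √(8 * k * m)
      ≤ (k + m).choose m * q ^ k * (1 - q) ^ m := by
  have hk' : (0 : ℝ) < k := by exact_mod_cast hk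
  have hm' : (0 : ℝ) < m := by exact_mod_cast hm
  have hq1' : 0 < 1 - q := sub_pos.2 hq1
  have hsq : √((k : ℝ) + m) * (k + m) ^ (k + m)
      ≤ (k + m).choose m * k ^ k * m ^ m * √(8 * k * m) := by
    rw [← pow_le_pow_iff_left₀ (by positivity) (by positivity) two_ne_zero]
    calc (√((k : ℝ) + m) * (k + m) ^ (k + m)) ^ 2 = ((k : ℝ) + m) ^ (2 * (k + m) + 1) := by
          rw [mul_pow, sq_sqrt (by positivity)]; ring
      _ ≤ 8 * k ^ (2 * k + 1) * m ^ (2 * m + 1) * (k + m).choose m ^ 2 := by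
          exact_mod_cast pow_le_choose_sq hk hm
      _ = ((k + m).choose m * k ^ k * m ^ m * √(8 * k * m)) ^ 2 := by
          rw [mul_pow, sq_sqrt (by positivity)]; ring
  rw [exp_neg_mul_klBin hk hm hq0 hq1, div_le_iff₀ (by positivity)]
  calc √((k : ℝ) + m) * (((k + m) * q / k) ^ k * ((k + m) * (1 - q) / m) ^ m)
      = q ^ k * (1 - q) ^ m * (√((k : ℝ) + m) * (k + m) ^ (k + m)) / (k ^ k * m ^ m) := by
        rw [div_pow, div_pow, mul_pow, mul_pow, pow_add]
        field_simp
    _ ≤ q ^ k * (1 - q) ^ m * ((k + m).choose m * k ^ k * m ^ m * √(8 * k * m))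
          / (k ^ k * m ^ m) := by gcongr
    _ = (k + m).choose m * q ^ k * (1 - q) ^ m * √(8 * k * m) := by
        field_simp

theorem failure_prob_LB_general
    {Ω : Type*} [MeasurableSpace Ω] (μ : Measure Ω) [IsProbabilityMeasure μ]
    (p : ℝ) (hp0 : 0 < p) (hp1 : p < 1)
    (r N : ℕ) (hr : 2 ≤ r) (hrN : r < N)
    (τ : Fin r → Ω → ℕ) (hmeas : ∀ i, Measurable (τ i))
    (hgeo : ∀ i, ∀ k : ℕ, μ {ω | τ i ω = k + 1} = ENNReal.ofReal (p ^ k * (1 - p)))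
    (hind : iIndepFun τ μ) :
    (1 - p) * Real.sqrt N
        * Real.exp (-(N : ℝ) * klBin (((r : ℝ) - 1) / N) (1 - p))
        / Real.sqrt (8 * ((r : ℝ) - 1) * ((N : ℝ) - r + 1))
      ≤ (μ {ω | N < ∑ i, τ i ω}).toReal := by
  obtain ⟨k, rfl⟩ : ∃ k, r = k + 1 := ⟨r - 1, by omega⟩
  obtain ⟨m, rfl⟩ : ∃ m, N = k + m := ⟨N - k, by omega⟩
  have hprob := ofReal_choose_mul_le_measure_sum_eq hmeas hp0.le hp1.le hgeo hind m
  rw [Fintype.card_fin, show k + 1 + m - 1 = k + m by omega,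
    ENNReal.ofReal_le_iff_le_toReal (measure_ne_top _ _)] at hprob
  have hevent : {ω | ∑ i, τ i ω = m + (k + 1)} ⊆ {ω | k + m < ∑ i, τ i ω} :=
    fun ω (h : ∑ i, τ i ω = m + (k + 1)) => show k + m < ∑ i, τ i ω by omega
  push_cast
  rw [show (k : ℝ) + 1 - 1 = k by ring, show (k : ℝ) + m - (k + 1) + 1 = m by ring]
  calc (1 - p) * √((k : ℝ) + m) * exp (-((k : ℝ) + m) * klBin (k / (k + m)) (1 - p))
        / √(8 * k * m)
      = (1 - p) * (√((k : ℝ) + m) * exp (-((k : ℝ) + m) * klBin (k / (k + m)) (1 - p))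
          / √(8 * k * m)) := by ring
    _ ≤ (1 - p) * ((k + m).choose m * (1 - p) ^ k * (1 - (1 - p)) ^ m) := by
        gcongr
        exact sqrt_mul_exp_neg_mul_klBin_le (by omega) (by omega) (by linarith) (by linarith)
    _ = (k + m).choose m * (p ^ m * (1 - p) ^ (k + 1)) := by ring
    _ ≤ (μ {ω | ∑ i, τ i ω = m + (k + 1)}).toReal := hprob
    _ ≤ (μ {ω | k + m < ∑ i, τ i ω}).toReal :=
        ENNReal.toReal_mono (measure_ne_top _ _) (measure_mono hevent)

/-- Lower bound on the arrive-failure probability: for `2 ≤ r < N`,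
`P(τ₁+⋯+τ_r > N) ≥ (1-p)·√N·exp(-N·D((r-1)/N ‖ 1-p)) / √(8(r-1)(N-r+1))`. -/
theorem failure_prob_LB
    {Ω : Type*} [MeasurableSpace Ω] (μ : Measure Ω) [IsProbabilityMeasure μ]
    (p : ℝ) (hp0 : 0 < p) (hp1 : p < 1)
    (r N : ℕ) (hr : 2 ≤ r) (hrN : r < N)
    (τ : Fin r → Ω → ℕ) (hmeas : ∀ i, Measurable (τ i))
    (hzero : ∀ i, μ {ω | τ i ω = 0} = 0)
    (hgeo : ∀ i, ∀ k : ℕ, μ {ω | τ i ω = k + 1} = ENNReal.ofReal (p ^ k * (1 - p)))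
    (hind : iIndepFun τ μ) :
    (1 - p) * Real.sqrt N
        * Real.exp (-(N : ℝ) * klBin (((r : ℝ) - 1) / N) (1 - p))
        / Real.sqrt (8 * ((r : ℝ) - 1) * ((N : ℝ) - r + 1))
      ≤ (μ {ω | N < ∑ i, τ i ω}).toReal :=
  failure_prob_LB_general μ p hp0 hp1 r N hr hrN τ hmeas hgeo hind
end

section
/- Let p ∈ (0,1) and α ∈ (0, 1-p). With r = ⌈αN⌉ and τ₁,…,τ_r i.i.d. geometric with success probability 1-p, the limit lim_{N→∞} -(1/N) ln P(τ₁+⋯+τ_r > N) exists and equals D(α ‖ 1-p) = α ln(α/(1-p)) + (1-α) ln((1-α)/p). -/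
/-!
With `⌈αN⌉ = r + 1`, the sum `S = τ₀ + ⋯ + τ_r` has the negative binomial law
`P(S = m + 1) = C(m, r) (1 - p)^(r + 1) p^(m - r)`. For `m ≥ N` consecutive terms of this law
have ratio `(m + 1) p / (m + 1 - r) ≤ p / (1 - α) < 1`, so the tail `P(S > N)` lies within a
constant factor of its first term `C(N, r) (1 - p)^(r + 1) p^(N - r)`. By Stirling's bounds,
`log C(N, r) = N H(r / N) + O(log N)` with `H` the binary entropy, and
`-H(α) - α log (1 - p) - (1 - α) log p = -D(α ‖ 1 - p)`.
-/

open MeasureTheory ProbabilityTheory Real Filter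

open Finset Topology
open scoped Nat

lemma sub_le_log_factorial (n : ℕ) : n * log n - n ≤ log n ! := by
  rcases eq_or_ne n 0 with rfl | hn
  · simp
  have h2π : 0 < log (2 * π) := log_pos (by linarith [pi_gt_three])
  linarith [Stirling.le_log_factorial_stirling hn, log_natCast_nonneg n]

lemma log_factorial_le (n : ℕ) : log n ! ≤ n * log n - n + log n / 2 + 1 := by
  rcases eq_or_ne n 0 with rfl | hn
  · simp
  have hn0 : (0 : ℝ) < n := by positivity
  obtain ⟨m, rfl⟩ := Nat.exists_eq_succ_of_ne_zero hn
  have hlog := log_le_log (Stirling.stirlingSeq'_pos m) (Stirling.stirlingSeq'_antitone m.zero_le)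
  simp only [Function.comp_apply, Nat.succ_eq_add_one, zero_add] at hlog
  rw [Stirling.log_stirlingSeq_formula, Stirling.stirlingSeq_one,
    log_div (exp_pos 1).ne' (by positivity), log_exp, log_sqrt (by norm_num),
    log_mul (by norm_num) hn0.ne', log_div hn0.ne' (exp_pos 1).ne', log_exp] at hlog
  linarith

lemma mul_binEntropy_div (x y : ℝ) :
    y * binEntropy (x / y) = negMulLog x + negMulLog (y - x) - negMulLog y := by
  rcases eq_or_ne y 0 with rfl | hy
  · simp [negMulLog, log_neg_eq_log]
  have hx := negMulLog_mul y (x / y)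
  have hyx := negMulLog_mul y (1 - x / y)
  rw [mul_div_cancel₀ x hy] at hx
  rw [mul_one_sub, mul_div_cancel₀ x hy] at hyx
  rw [binEntropy_eq_negMulLog_add_negMulLog_one_sub, hx, hyx]
  ring

lemma abs_log_choose_sub_mul_binEntropy_le {n k : ℕ} (hk : k ≤ n) :
    |log (n.choose k) - n * binEntropy (k / n)| ≤ log n + 2 := by
  have hfac : (n ! : ℝ) = n.choose k * (k ! * (n - k)!) := by
    exact_mod_cast (Nat.choose_mul_factorial_mul_factorial hk).symm.trans (mul_assoc _ _ _)
  have hlog : log n ! = log (n.choose k) + log k ! + log (n - k)! := by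
    have hc : (n.choose k : ℝ) ≠ 0 := by exact_mod_cast (Nat.choose_pos hk).ne'
    rw [hfac, log_mul hc (by positivity), log_mul (by positivity) (by positivity), add_assoc]
  have hmono : ∀ m ≤ n, log m ≤ log n := fun m hm => by
    rcases eq_or_ne m 0 with rfl | hm0
    · simpa using log_natCast_nonneg n
    · exact log_le_log (by positivity) (by exact_mod_cast hm)
  have hH := mul_binEntropy_div (k : ℝ) n
  simp only [negMulLog] at hH
  have hlo := sub_le_log_factorial (n - k)
  have hhi := log_factorial_le (n - k)
  have hmono' := hmono (n - k) (Nat.sub_le n k)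
  rw [Nat.cast_sub hk] at hlo hhi hmono'
  rw [abs_le]
  constructor
  · linarith [sub_le_log_factorial n, log_factorial_le k, hmono k hk]
  · linarith [log_factorial_le n, sub_le_log_factorial k, log_natCast_nonneg n]

lemma tendsto_log_choose_div {k : ℕ → ℕ} {a : ℝ}
    (hk : Tendsto (fun n => (k n : ℝ) / n) atTop (𝓝 a)) (hkn : ∀ᶠ n in atTop, k n ≤ n) :
    Tendsto (fun n : ℕ => log (n.choose (k n)) / n) atTop (𝓝 (binEntropy a)) := by
  have hH : Tendsto (fun n => binEntropy (k n / n)) atTop (𝓝 (binEntropy a)) :=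
    (binEntropy_continuous.tendsto a).comp hk
  have herr : Tendsto (fun n : ℕ => (log n + 2) / n) atTop (𝓝 0) := by
    have hlog := isLittleO_log_id_atTop.tendsto_div_nhds_zero.comp tendsto_natCast_atTop_atTop
    simpa [add_div] using hlog.add (tendsto_const_div_atTop_nhds_zero_nat 2)
  rw [tendsto_iff_norm_sub_tendsto_zero] at hH ⊢
  refine squeeze_zero' (Eventually.of_forall fun _ => norm_nonneg _) ?_ (by simpa using hH.add herr)
  filter_upwards [hkn, eventually_ne_atTop 0] with n hkn hn
  have hn0 : (0 : ℝ) < n := by positivity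
  have hsplit : log (n.choose (k n)) / n - binEntropy a
      = (log (n.choose (k n)) - n * binEntropy (k n / n)) / n
        + (binEntropy (k n / n) - binEntropy a) := by
    field_simp
    ring
  have herr_le : |(log (n.choose (k n)) - n * binEntropy (k n / n)) / n| ≤ (log n + 2) / n := by
    rw [abs_div, abs_of_pos hn0]
    exact div_le_div_of_nonneg_right (abs_log_choose_sub_mul_binEntropy_le hkn) hn0.le
  rw [hsplit, Real.norm_eq_abs, add_comm _ ((log n + 2) / n)]
  exact (abs_add_le _ _).trans (add_le_add_left herr_le _)

/-- `negBinWeight p r m = P(τ₀ + ⋯ + τ_r = m)` for i.i.d. `τᵢ` with `P(τᵢ = k + 1) = pᵏ(1 - p)`: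
the negative binomial law with `r + 1` (not `r`) successes. -/
noncomputable def negBinWeight (p : ℝ) (r : ℕ) : ℕ → ℝ
  | 0 => 0
  | m + 1 => m.choose r * (1 - p) ^ (r + 1) * p ^ (m - r)

section NegBinWeight

variable {p : ℝ}

lemma negBinWeight_nonneg (hp0 : 0 ≤ p) (hp1 : p ≤ 1) (r m : ℕ) : 0 ≤ negBinWeight p r m := by
  have : 0 ≤ 1 - p := by linarith
  cases m <;> simp only [negBinWeight] <;> positivity

lemma negBinWeight_succ_pos (hp0 : 0 < p) (hp1 : p < 1) {r m : ℕ} (hrm : r ≤ m) :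
    0 < negBinWeight p r (m + 1) := by
  have : 0 < 1 - p := by linarith
  have : (0 : ℝ) < m.choose r := by exact_mod_cast Nat.choose_pos hrm
  simp only [negBinWeight]
  positivity

lemma sum_range_choose_eq_choose_succ (n r : ℕ) :
    ∑ i ∈ range n, i.choose r = n.choose (r + 1) := by
  induction n with
  | zero => simp
  | succ n ih => rw [sum_range_succ, ih, Nat.choose_succ_succ', add_comm]

lemma sum_antidiagonal_negBinWeight (r m : ℕ) :
    ∑ ij ∈ antidiagonal m, negBinWeight p r ij.1 * negBinWeight p 0 ij.2
      = negBinWeight p (r + 1) m := by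
  rcases m with _ | _ | n
  · simp [negBinWeight]
  · simp [negBinWeight, Nat.sum_antidiagonal_succ]
  rw [Nat.sum_antidiagonal_succ, Nat.sum_antidiagonal_succ']
  dsimp only
  have hterm : ∀ ij ∈ antidiagonal n,
      negBinWeight p r (ij.1 + 1) * negBinWeight p 0 (ij.2 + 1)
        = ij.1.choose r * ((1 - p) ^ (r + 2) * p ^ (n - r)) := by
    rintro ⟨i, j⟩ hij
    rw [HasAntidiagonal.mem_antidiagonal] at hij
    rcases lt_or_ge i r with hir | hri
    · simp [negBinWeight, Nat.choose_eq_zero_of_lt hir]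
    · simp only [negBinWeight, Nat.choose_zero_right, Nat.cast_one, one_mul, Nat.sub_zero]
      rw [show n - r = (i - r) + j by omega]
      ring
  rw [sum_congr rfl hterm, ← sum_mul, Nat.sum_antidiagonal_eq_sum_range_succ_mk]
  simp only [negBinWeight, zero_mul, mul_zero, zero_add]
  rw [← Nat.cast_sum, sum_range_choose_eq_choose_succ, Nat.add_sub_add_right]
  ring

lemma negBinWeight_succ_le_mul {ρ : ℝ} (hp0 : 0 ≤ p) (hp1 : p ≤ 1) {r m : ℕ} (hrm : r ≤ m)
    (hratio : (m + 1) * p ≤ ρ * (m + 1 - r)) :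
    negBinWeight p r (m + 2) ≤ ρ * negBinWeight p r (m + 1) := by
  have hq : 0 ≤ 1 - p := by linarith
  have hgap : (0 : ℝ) < m + 1 - r := by
    have : (r : ℝ) ≤ m := by exact_mod_cast hrm
    linarith
  have hpascal : (m.choose r : ℝ) * (m + 1) = (m + 1).choose r * (m + 1 - r) := by
    have := congrArg (Nat.cast (R := ℝ)) (Nat.choose_mul_succ_eq m r)
    push_cast [Nat.cast_sub (by omega : r ≤ m + 1)] at this
    exact this
  have hchoose : ((m + 1).choose r : ℝ) * p ≤ ρ * m.choose r := by
    refine le_of_mul_le_mul_right ?_ hgap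
    calc ((m + 1).choose r : ℝ) * p * (m + 1 - r) = m.choose r * ((m + 1) * p) := by
          rw [mul_right_comm, ← hpascal]; ring
      _ ≤ m.choose r * (ρ * (m + 1 - r)) := by gcongr
      _ = ρ * m.choose r * (m + 1 - r) := by ring
  simp only [negBinWeight]
  rw [show m + 1 - r = (m - r) + 1 by omega, pow_succ]
  calc ((m + 1).choose r : ℝ) * (1 - p) ^ (r + 1) * (p ^ (m - r) * p)
      = ((m + 1).choose r * p) * ((1 - p) ^ (r + 1) * p ^ (m - r)) := by ring
    _ ≤ (ρ * m.choose r) * ((1 - p) ^ (r + 1) * p ^ (m - r)) := by gcongr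
    _ = ρ * (m.choose r * (1 - p) ^ (r + 1) * p ^ (m - r)) := by ring

lemma tendsto_log_negBinWeight_div {α : ℝ} (hp0 : 0 < p) (hp1 : p < 1) {r : ℕ → ℕ}
    (hr : Tendsto (fun N => (r N : ℝ) / N) atTop (𝓝 α)) (hrN : ∀ᶠ N in atTop, r N ≤ N) :
    Tendsto (fun N : ℕ => log (negBinWeight p (r N) (N + 1)) / N) atTop
      (𝓝 (binEntropy α + α * log (1 - p) + (1 - α) * log p)) := by
  have hq : 0 < 1 - p := by linarith
  have hsucc : Tendsto (fun N => ((r N : ℝ) + 1) / N) atTop (𝓝 α) := by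
    simpa [add_div] using hr.add tendsto_one_div_atTop_nhds_zero_nat
  have hlim := ((tendsto_log_choose_div hr hrN).add (hsucc.mul_const (log (1 - p)))).add
    ((tendsto_const_nhds (x := (1 : ℝ)).sub hr).mul_const (log p))
  refine hlim.congr' ?_
  filter_upwards [hrN, eventually_ne_atTop 0] with N hle hN
  have hc : (N.choose (r N) : ℝ) ≠ 0 := by exact_mod_cast (Nat.choose_pos hle).ne'
  simp only [negBinWeight]
  rw [log_mul (by positivity) (by positivity), log_mul hc (by positivity), log_pow, log_pow,
    Nat.cast_sub hle]
  field_simp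
  push_cast
  ring

end NegBinWeight

lemma summable_of_succ_le_mul {f : ℕ → ℝ} {ρ : ℝ} (hf : ∀ j, 0 ≤ f j) (hρ0 : 0 ≤ ρ)
    (hρ1 : ρ < 1) (hstep : ∀ j, f (j + 1) ≤ ρ * f j) : Summable f :=
  ((summable_geometric_of_lt_one hρ0 hρ1).mul_right (f 0)).of_nonneg_of_le hf
    fun j => le_geom hρ0 j fun k _ => hstep k

lemma tsum_le_div_of_succ_le_mul {f : ℕ → ℝ} {ρ : ℝ} (hf : ∀ j, 0 ≤ f j) (hρ0 : 0 ≤ ρ)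
    (hρ1 : ρ < 1) (hstep : ∀ j, f (j + 1) ≤ ρ * f j) : ∑' j, f j ≤ f 0 / (1 - ρ) := by
  calc ∑' j, f j ≤ ∑' j, ρ ^ j * f 0 :=
        (summable_of_succ_le_mul hf hρ0 hρ1 hstep).tsum_le_tsum
          (fun j => le_geom hρ0 j fun k _ => hstep k)
          ((summable_geometric_of_lt_one hρ0 hρ1).mul_right (f 0))
    _ = f 0 / (1 - ρ) := by rw [tsum_mul_right, tsum_geometric_of_lt_one hρ0 hρ1, inv_mul_eq_div]

section Measure

variable {Ω : Type*} [MeasurableSpace Ω] {μ : Measure Ω}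

lemma measure_add_eq_sum_antidiagonal {X Y : Ω → ℕ} (hX : Measurable X) (hY : Measurable Y)
    (hXY : IndepFun X Y μ) (m : ℕ) :
    μ {ω | X ω + Y ω = m}
      = ∑ ij ∈ antidiagonal m, μ {ω | X ω = ij.1} * μ {ω | Y ω = ij.2} := by
  have hset : {ω | X ω + Y ω = m}
      = ⋃ ij ∈ antidiagonal m, X ⁻¹' {ij.1} ∩ Y ⁻¹' {ij.2} := by
    ext ω
    simp
  rw [hset, measure_biUnion_finset]
  · exact sum_congr rfl fun ij _ =>
      hXY.measure_inter_preimage_eq_mul _ _ (measurableSet_singleton _) (measurableSet_singleton _)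
  · intro ij _ kl _ hne
    refine Set.disjoint_left.2 fun ω hij hkl => hne ?_
    simp only [Set.mem_inter_iff, Set.mem_preimage, Set.mem_singleton_iff] at hij hkl
    exact Prod.ext (hij.1.symm.trans hkl.1) (hij.2.symm.trans hkl.2)
  · exact fun ij _ => (hX (measurableSet_singleton _)).inter (hY (measurableSet_singleton _))

lemma measure_lt_eq_tsum {X : Ω → ℕ} (hX : Measurable X) (N : ℕ) :
    μ {ω | N < X ω} = ∑' j, μ {ω | X ω = N + 1 + j} := by
  have hset : {ω | N < X ω} = ⋃ j : ℕ, {ω | X ω = N + 1 + j} := by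
    ext ω
    simp only [Set.mem_ofPred_eq, Set.mem_iUnion]
    exact ⟨fun h => ⟨X ω - N - 1, by omega⟩, fun ⟨j, hj⟩ => by omega⟩
  rw [hset, measure_iUnion]
  · intro i j hij
    exact Set.disjoint_left.2 fun ω hi hj => hij (by simp only [Set.mem_ofPred_eq] at hi hj; omega)
  · exact fun j => hX (measurableSet_singleton _)

variable {p : ℝ} {τ : ℕ → Ω → ℕ}

lemma measure_sum_range_eq_negBinWeight (hp0 : 0 ≤ p) (hp1 : p ≤ 1)
    (hmeas : ∀ i, Measurable (τ i)) (hind : iIndepFun τ μ)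
    (hτ : ∀ i m, μ {ω | τ i ω = m} = ENNReal.ofReal (negBinWeight p 0 m)) (r m : ℕ) :
    μ {ω | ∑ i ∈ range (r + 1), τ i ω = m} = ENNReal.ofReal (negBinWeight p r m) := by
  induction r generalizing m with
  | zero => simpa using hτ 0 m
  | succ r ih =>
    have hindep : IndepFun (fun ω => ∑ i ∈ range (r + 1), τ i ω) (τ (r + 1)) μ := by
      simpa [Finset.sum_fn] using
        hind.indepFun_finsetSum_of_notMem hmeas (by simp : r + 1 ∉ range (r + 1))
    simp only [sum_range_succ _ (r + 1)]
    rw [measure_add_eq_sum_antidiagonal (Finset.measurable_sum _ fun i _ => hmeas i) (hmeas _)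
        hindep,
      ← sum_antidiagonal_negBinWeight, ENNReal.ofReal_sum_of_nonneg]
    · refine sum_congr rfl fun ij _ => ?_
      rw [ih, hτ, ENNReal.ofReal_mul (negBinWeight_nonneg hp0 hp1 _ _)]
    · exact fun ij _ =>
        mul_nonneg (negBinWeight_nonneg hp0 hp1 _ _) (negBinWeight_nonneg hp0 hp1 _ _)

lemma negBinWeight_le_toReal_measure_lt_sum_le {ρ : ℝ} (hp0 : 0 ≤ p) (hpρ : p ≤ ρ) (hρ1 : ρ < 1)
    (hmeas : ∀ i, Measurable (τ i)) (hind : iIndepFun τ μ)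
    (hτ : ∀ i m, μ {ω | τ i ω = m} = ENNReal.ofReal (negBinWeight p 0 m))
    {r N : ℕ} (hrN : r ≤ N) (hratio : (N + 1) * p ≤ ρ * (N + 1 - r)) :
    negBinWeight p r (N + 1) ≤ (μ {ω | N < ∑ i ∈ range (r + 1), τ i ω}).toReal ∧
      (μ {ω | N < ∑ i ∈ range (r + 1), τ i ω}).toReal ≤ negBinWeight p r (N + 1) / (1 - ρ) := by
  have hp1 : p ≤ 1 := by linarith
  have hρ0 : 0 ≤ ρ := hp0.trans hpρ
  set f : ℕ → ℝ := fun j => negBinWeight p r (N + 1 + j) with hf_def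
  have hf : ∀ j, 0 ≤ f j := fun j => negBinWeight_nonneg hp0 hp1 _ _
  -- the ratio `(m + 1) p / (m + 1 - r)` of consecutive weights decreases in `m`
  have hstep : ∀ j, f (j + 1) ≤ ρ * f j := fun j => by
    have hj : (j : ℝ) * p ≤ j * ρ := mul_le_mul_of_nonneg_left hpρ j.cast_nonneg
    have := negBinWeight_succ_le_mul (ρ := ρ) hp0 hp1 (r := r) (m := N + j) (by omega)
      (by push_cast; linarith)
    simpa only [hf_def, ← add_assoc, add_right_comm N 1 j] using this
  have hsum := summable_of_succ_le_mul hf hρ0 hρ1 hstep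
  have htoReal : (μ {ω | N < ∑ i ∈ range (r + 1), τ i ω}).toReal = ∑' j, f j := by
    rw [measure_lt_eq_tsum (Finset.measurable_sum _ fun i _ => hmeas i),
      tsum_congr fun j => measure_sum_range_eq_negBinWeight hp0 hp1 hmeas hind hτ r _,
      ← ENNReal.ofReal_tsum_of_nonneg hf hsum, ENNReal.toReal_ofReal (tsum_nonneg hf)]
  rw [htoReal]
  exact ⟨hsum.le_tsum 0 fun j _ => hf j, tsum_le_div_of_succ_le_mul hf hρ0 hρ1 hstep⟩

end Measure

lemma klBin_one_sub_eq {p α : ℝ} (hp0 : 0 < p) (hp1 : p < 1) (hα0 : 0 < α) (hα1 : α < 1) :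
    klBin α (1 - p) = -(binEntropy α + α * log (1 - p) + (1 - α) * log p) := by
  rw [klBin, binEntropy, sub_sub_cancel, log_div hα0.ne' (by linarith),
    log_div (by linarith) hp0.ne', log_inv, log_inv]
  ring

lemma tendsto_log_div_of_le_of_le_div {f g : ℕ → ℝ} {c L : ℝ} (hc : 0 < c)
    (hf : ∀ᶠ N in atTop, 0 < f N) (hfg : ∀ᶠ N in atTop, f N ≤ g N ∧ g N ≤ f N / c)
    (hlim : Tendsto (fun N => log (f N) / N) atTop (𝓝 L)) :
    Tendsto (fun N => log (g N) / N) atTop (𝓝 L) := by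
  have hupper : Tendsto (fun N : ℕ => log (f N) / N - log c / N) atTop (𝓝 L) := by
    simpa using hlim.sub (tendsto_const_div_atTop_nhds_zero_nat (log c))
  refine tendsto_of_tendsto_of_tendsto_of_le_of_le' hlim hupper ?_ ?_ <;>
    filter_upwards [hf, hfg] with N hf ⟨hfg, hgf⟩
  · exact div_le_div_of_nonneg_right (log_le_log hf hfg) N.cast_nonneg
  · rw [← sub_div, ← log_div hf.ne' hc.ne']
    exact div_le_div_of_nonneg_right (log_le_log (hf.trans_le hfg) hgf) N.cast_nonneg

lemma exists_ceil_mul_eq_succ (α : ℝ) (hα0 : 0 < α) :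
    ∃ r : ℕ → ℕ, (∀ N : ℕ, N ≠ 0 → ⌈α * N⌉₊ = r N + 1) ∧ (∀ N : ℕ, (r N : ℝ) ≤ α * N) ∧
      Tendsto (fun N => (r N : ℝ) / N) atTop (𝓝 α) := by
  refine ⟨fun N => ⌈α * N⌉₊ - 1, fun N hN => ?_, fun N => ?_, ?_⟩
  · have : 0 < ⌈α * N⌉₊ := Nat.ceil_pos.2 (by positivity)
    dsimp only
    omega
  · have := Nat.ceil_le_floor_add_one (α * N)
    calc ((⌈α * N⌉₊ - 1 : ℕ) : ℝ) ≤ ⌊α * N⌋₊ := by exact_mod_cast (by omega)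
      _ ≤ α * N := Nat.floor_le (by positivity)
  · have hceil := ((tendsto_nat_ceil_mul_div_atTop hα0.le).comp tendsto_natCast_atTop_atTop).sub
      tendsto_one_div_atTop_nhds_zero_nat
    rw [sub_zero] at hceil
    refine hceil.congr' ?_
    filter_upwards [eventually_ne_atTop 0] with N hN
    have : 0 < ⌈α * N⌉₊ := Nat.ceil_pos.2 (by positivity)
    simp [Nat.cast_sub this, sub_div]

theorem error_exponent_homogeneous_general
    {Ω : Type*} [MeasurableSpace Ω] (μ : Measure Ω)
    (p : ℝ) (hp0 : 0 < p) (hp1 : p < 1)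
    (α : ℝ) (hα0 : 0 < α) (hα1 : α < 1 - p)
    (τ : ℕ → Ω → ℕ) (hmeas : ∀ i, Measurable (τ i))
    (hzero : ∀ i, μ {ω | τ i ω = 0} = 0)
    (hgeo : ∀ i, ∀ k : ℕ, μ {ω | τ i ω = k + 1} = ENNReal.ofReal (p ^ k * (1 - p)))
    (hind : iIndepFun τ μ) :
    Tendsto
      (fun N : ℕ =>
        -(1 / (N : ℝ)) *
          Real.log ((μ {ω | N < ∑ i ∈ Finset.range ⌈α * N⌉₊, τ i ω}).toReal))
      atTop (nhds (klBin α (1 - p))) := by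
  have hτ : ∀ i m, μ {ω | τ i ω = m} = ENNReal.ofReal (negBinWeight p 0 m) := by
    rintro i (_ | k)
    · simpa [negBinWeight] using hzero i
    · simpa [negBinWeight, mul_comm] using hgeo i k
  obtain ⟨r, hceil, hrα, hr⟩ := exists_ceil_mul_eq_succ α hα0
  have hrN : ∀ N, r N ≤ N := fun N => by
    exact_mod_cast (hrα N).trans (mul_le_of_le_one_left N.cast_nonneg (by linarith))
  set ρ := p / (1 - α)
  have hρα : ρ * (1 - α) = p := div_mul_cancel₀ p (by linarith)
  have hpρ : p ≤ ρ := by rw [le_div_iff₀ (by linarith)]; nlinarith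
  have hρ1 : ρ < 1 := by rw [div_lt_one (by linarith)]; linarith
  have hratio : ∀ N : ℕ, (N + 1) * p ≤ ρ * (N + 1 - r N) := fun N => by
    rw [← hρα, mul_comm, mul_assoc]
    exact mul_le_mul_of_nonneg_left (by nlinarith [hrα N]) (hp0.le.trans hpρ)
  have hbounds := fun N (hN : N ≠ 0) => hceil N hN ▸
    negBinWeight_le_toReal_measure_lt_sum_le hp0.le hpρ hρ1 hmeas hind hτ (hrN N) (hratio N)
  have hlim := tendsto_log_div_of_le_of_le_div (sub_pos.2 hρ1)
    (Eventually.of_forall fun N => negBinWeight_succ_pos hp0 hp1 (hrN N))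
    ((eventually_ne_atTop 0).mono hbounds)
    (tendsto_log_negBinWeight_div hp0 hp1 hr (Eventually.of_forall hrN))
  rw [klBin_one_sub_eq hp0 hp1 hα0 (by linarith)]
  exact hlim.neg.congr fun N => by ring

/-- Error exponent of single-packet transmission over homogeneous links: for `0 < α < 1 - p`
and `r = ⌈αN⌉`, `-(1/N)·ln P(τ₁+⋯+τ_r > N) → D(α ‖ 1-p)` as `N → ∞`. -/
theorem error_exponent_homogeneous
    {Ω : Type*} [MeasurableSpace Ω] (μ : Measure Ω) [IsProbabilityMeasure μ]
    (p : ℝ) (hp0 : 0 < p) (hp1 : p < 1)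
    (α : ℝ) (hα0 : 0 < α) (hα1 : α < 1 - p)
    (τ : ℕ → Ω → ℕ) (hmeas : ∀ i, Measurable (τ i))
    (hzero : ∀ i, μ {ω | τ i ω = 0} = 0)
    (hgeo : ∀ i, ∀ k : ℕ, μ {ω | τ i ω = k + 1} = ENNReal.ofReal (p ^ k * (1 - p)))
    (hind : iIndepFun τ μ) :
    Tendsto
      (fun N : ℕ =>
        -(1 / (N : ℝ)) *
          Real.log ((μ {ω | N < ∑ i ∈ Finset.range ⌈α * N⌉₊, τ i ω}).toReal))
      atTop (nhds (klBin α (1 - p))) :=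
  error_exponent_homogeneous_general μ p hp0 hp1 α hα0 hα1 τ hmeas hzero hgeo hind
end
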